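/- Let A ∈ ℝ^{n×n} and B ∈ ℝ^{n×m} be such that the pair (A,B) is controllable, i.e., the controllability matrix [B, AB, …, A^{n−1}B] has rank n. Then there exists K ∈ ℝ^{m×n} such that every (complex) eigenvalue of A + BK has modulus strictly less than 1. Consequently, for any d ∈ ℝⁿ and any steady state (x̄, ū) with x̄ = Ax̄ + Bū + d, there exist c ≥ 1 and ε ∈ (0,1) such that, for every initial condition x₀ ∈ ℝⁿ, the closed-loop sequences u_k = ū + K(x_k − x̄) and x_{k+1} = A x_k + B u_k + d satisfy ‖x_k − x̄‖ + ‖u_k − ū‖ ≤ c ε^k ‖x₀ − x̄‖ for all k ≥ 0. -/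

import Mathlib

/-- The controllability matrix `[B, AB, …, A^{n-1}B]`, as a matrix indexed by
`Fin n × (Fin n × Fin m)` with block `(k, ·)` equal to `A^k B`. -/
noncomputable def ctrbMatrix {n m : ℕ} (A : Matrix (Fin n) (Fin n) ℝ)
    (B : Matrix (Fin n) (Fin m) ℝ) : Matrix (Fin n) (Fin n × Fin m) ℝ :=
  Matrix.of fun i p => (A ^ (p.1 : ℕ) * B) i p.2

/-- The successor state `x⁺ = A x + B u + d`. -/
def nextState {n m : ℕ} (A : Matrix (Fin n) (Fin n) ℝ) (B : Matrix (Fin n) (Fin m) ℝ)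
    (d : EuclideanSpace ℝ (Fin n)) (x : EuclideanSpace ℝ (Fin n))
    (u : EuclideanSpace ℝ (Fin m)) : EuclideanSpace ℝ (Fin n) :=
  WithLp.toLp 2 (fun i => (∑ j, A i j * x j) + (∑ j, B i j * u j) + d i)

/-!
Deadbeat control. Split `V = W ⊕ range g` and let `P : V → W` be the projection along `range g`.
The compressed pair `(P f|_W, P f g)` on the smaller space `W` is again controllable, and a
nilpotent closed loop `N = P f|_W + P f g K_W` for it lifts: one can choose `K` with
`f + g K = L ∘ (P f)` where `L = ι_W + g K_W`, and `(P f) ∘ L = N`, so `f + g K` is nilpotent too.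
Hence some `A + BK` is nilpotent. Its only eigenvalue is `0`, and the error
`x_k - x̄ = (A + BK)^k (x₀ - x̄)` vanishes after finitely many steps, which gives an
exponential bound with any rate.
-/

open Module Submodule LinearMap

theorem LinearMap.comp_pow_succ {R M N : Type*} [Semiring R] [AddCommMonoid M] [Module R M]
    [AddCommMonoid N] [Module R N] (a : N →ₗ[R] M) (b : M →ₗ[R] N) (j : ℕ) :
    (a ∘ₗ b) ^ (j + 1) = a ∘ₗ ((b ∘ₗ a) ^ j) ∘ₗ b := by
  induction j with
  | zero => rfl
  | succ j ih =>
    rw [pow_succ, ih, pow_succ, Module.End.mul_eq_comp, Module.End.mul_eq_comp]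
    simp only [LinearMap.comp_assoc]

section Reachable

variable {R V U : Type*} [Semiring R] [AddCommMonoid V] [Module R V] [AddCommMonoid U]
  [Module R U]

def reachableSubspace (f : Module.End R V) (g : U →ₗ[R] V) : Submodule R V :=
  ⨆ k : ℕ, range ((f ^ k) ∘ₗ g)

variable {f : Module.End R V} {g : U →ₗ[R] V}

theorem range_le_reachableSubspace : range g ≤ reachableSubspace f g :=
  le_iSup (fun k : ℕ => range ((f ^ k) ∘ₗ g)) 0

theorem apply_mem_reachableSubspace {x : V} (hx : x ∈ reachableSubspace f g) :
    f x ∈ reachableSubspace f g := by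
  suffices (reachableSubspace f g).map f ≤ reachableSubspace f g from this ⟨x, hx, rfl⟩
  rw [reachableSubspace, Submodule.map_iSup]
  refine iSup_le fun k => ?_
  rw [← range_comp, ← comp_assoc, ← Module.End.mul_eq_comp, ← pow_succ']
  exact le_iSup (fun k : ℕ => range ((f ^ k) ∘ₗ g)) (k + 1)

theorem reachableSubspace_le {p : Submodule R V} (hg : range g ≤ p) (hf : ∀ x ∈ p, f x ∈ p) :
    reachableSubspace f g ≤ p := by
  refine iSup_le fun k => ?_
  induction k with
  | zero => rwa [pow_zero, Module.End.one_eq_id, id_comp]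
  | succ k ih =>
    rintro _ ⟨u, rfl⟩
    rw [pow_succ', Module.End.mul_eq_comp, comp_assoc, comp_apply]
    exact hf _ (ih ⟨u, rfl⟩)

end Reachable

section Deadbeat

variable {𝕜 V U : Type*} [DivisionRing 𝕜] [AddCommGroup V] [Module 𝕜 V] [AddCommGroup U]
  [Module 𝕜 U] {f : Module.End 𝕜 V} {g : U →ₗ[𝕜] V} {W : Submodule 𝕜 V}

theorem reachableSubspace_compress_eq_top (hW : IsCompl W (range g))
    (h : reachableSubspace f g = ⊤) :
    reachableSubspace (W.projectionOnto _ hW ∘ₗ f ∘ₗ W.subtype)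
      (W.projectionOnto _ hW ∘ₗ f ∘ₗ g) = ⊤ := by
  set P := W.projectionOnto _ hW
  set R := reachableSubspace (P ∘ₗ f ∘ₗ W.subtype) (P ∘ₗ f ∘ₗ g)
  suffices hle : reachableSubspace f g ≤ R.comap P by
    refine eq_top_iff.2 fun w _ => ?_
    simpa [P] using hle (h ▸ mem_top : (w : V) ∈ reachableSubspace f g)
  refine reachableSubspace_le ?_ fun x hx => ?_
  · rintro _ ⟨u, rfl⟩
    simp [P, projectionOnto_apply_of_mem_right hW (mem_range_self g u)]
  · obtain ⟨u, hu⟩ : (range g).projection W hW.symm x ∈ range g := projection_apply_mem _ _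
    have hx_eq : x = (P x : V) + g u := by
      rw [hu, coe_projectionOnto_apply, projection_add_projection_eq_self]
    rw [mem_comap, hx_eq, map_add, map_add]
    exact add_mem (apply_mem_reachableSubspace hx) (range_le_reachableSubspace ⟨u, rfl⟩)

theorem exists_add_comp_eq_comp_projectionOnto (hW : IsCompl W (range g)) (Kq : W →ₗ[𝕜] U) :
    ∃ K : V →ₗ[𝕜] U, f + g ∘ₗ K = (W.subtype + g ∘ₗ Kq) ∘ₗ W.projectionOnto _ hW ∘ₗ f := by
  obtain ⟨h, hh⟩ := g.rangeRestrict.exists_rightInverse_of_surjective g.range_rangeRestrict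
  have hgh (s : range g) : g (h s) = s := congr_arg Subtype.val (LinearMap.congr_fun hh s)
  refine ⟨Kq ∘ₗ W.projectionOnto _ hW ∘ₗ f - h ∘ₗ (range g).projectionOnto W hW.symm ∘ₗ f, ?_⟩
  ext x
  have hfx := projection_add_projection_eq_self hW (f x)
  simp only [LinearMap.add_apply, comp_apply, LinearMap.sub_apply, map_sub, hgh, subtype_apply,
    coe_projectionOnto_apply]
  nth_rw 1 [← hfx]
  abel

theorem exists_isNilpotent_add_comp_of_reachableSubspace_eq_top [FiniteDimensional 𝕜 V]
    (h : reachableSubspace f g = ⊤) : ∃ K : V →ₗ[𝕜] U, IsNilpotent (f + g ∘ₗ K) := by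
  induction hN : finrank 𝕜 V using Nat.strong_induction_on generalizing V with
  | _ N ih =>
  by_cases hg : range g = ⊥
  · have hbot : reachableSubspace f g = ⊥ :=
      le_bot_iff.1 (reachableSubspace_le hg.le fun x hx => by simp [(mem_bot 𝕜).1 hx])
    have : Subsingleton V := (subsingleton_iff 𝕜).1 (subsingleton_iff_bot_eq_top.1 (hbot ▸ h))
    exact ⟨0, 1, Subsingleton.elim _ _⟩
  obtain ⟨W, hW⟩ := (range g).exists_isCompl
  have hW_lt : finrank 𝕜 W < N := by
    have := finrank_add_eq_of_isCompl hW
    have := finrank_eq_zero.not.2 hg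
    omega
  obtain ⟨Kq, j, hj⟩ := ih _ hW_lt (reachableSubspace_compress_eq_top hW.symm h) rfl
  obtain ⟨K, hK⟩ := exists_add_comp_eq_comp_projectionOnto hW.symm Kq
  refine ⟨K, j + 1, ?_⟩
  simp only [comp_assoc] at hj
  rw [hK, comp_pow_succ, comp_add]
  simp only [comp_assoc]
  rw [hj, zero_comp, comp_zero]

end Deadbeat

open Matrix

theorem reachableSubspace_toLin'_eq_top_of_rank_ctrbMatrix {n m : ℕ}
    {A : Matrix (Fin n) (Fin n) ℝ} {B : Matrix (Fin n) (Fin m) ℝ}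
    (h : (ctrbMatrix A B).rank = n) : reachableSubspace (toLin' A) (toLin' B) = ⊤ := by
  have hrange : range (ctrbMatrix A B).mulVecLin = ⊤ :=
    eq_top_of_finrank_eq (by rw [finrank_fin_fun]; exact h)
  rw [eq_top_iff, ← hrange, range_mulVecLin, span_le]
  rintro _ ⟨⟨k, j⟩, rfl⟩
  refine le_iSup (fun k : ℕ => range ((toLin' A ^ k) ∘ₗ toLin' B)) k ⟨Pi.single j 1, ?_⟩
  rw [← toLin'_pow, ← toLin'_mul, toLin'_apply, mulVec_single_one]
  rfl

theorem exists_isNilpotent_add_mul_of_rank_ctrbMatrix {n m : ℕ}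
    {A : Matrix (Fin n) (Fin n) ℝ} {B : Matrix (Fin n) (Fin m) ℝ}
    (h : (ctrbMatrix A B).rank = n) : ∃ K : Matrix (Fin m) (Fin n) ℝ, IsNilpotent (A + B * K) := by
  obtain ⟨K, hK⟩ := exists_isNilpotent_add_comp_of_reachableSubspace_eq_top
    (reachableSubspace_toLin'_eq_top_of_rank_ctrbMatrix h)
  refine ⟨LinearMap.toMatrix' K, ?_⟩
  rw [← IsNilpotent.map_iff (toLinAlgEquiv' (R := ℝ) (n := Fin n)).injective]
  show IsNilpotent (toLin' (A + B * LinearMap.toMatrix' K))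
  rwa [map_add, toLin'_mul, toLin'_toMatrix']

theorem spectrum_subset_singleton_zero_of_isNilpotent {𝕜 A : Type*} [Field 𝕜] [Ring A]
    [Algebra 𝕜 A] {a : A} (ha : IsNilpotent a) : spectrum 𝕜 a ⊆ {0} := by
  intro μ hμ
  by_contra hμ0
  refine spectrum.mem_iff.1 hμ ?_
  rw [sub_eq_add_neg]
  exact ha.neg.isUnit_add_left_of_commute ((isUnit_iff_ne_zero.2 hμ0).map (algebraMap 𝕜 A))
    (Algebra.commute_algebraMap_right μ _)

theorem IsNilpotent.exists_norm_pow_le {R : Type*} [SeminormedRing R] {a : R}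
    (ha : IsNilpotent a) {ε : ℝ} (hε : 0 < ε) : ∃ c, 1 ≤ c ∧ ∀ k, ‖a ^ k‖ ≤ c * ε ^ k := by
  obtain ⟨N, hN⟩ := ha
  refine ⟨1 + ∑ k ∈ Finset.range N, ‖a ^ k‖ / ε ^ k,
    le_add_of_nonneg_right (by positivity), fun k => ?_⟩
  rcases lt_or_ge k N with hk | hk
  · calc ‖a ^ k‖ = ‖a ^ k‖ / ε ^ k * ε ^ k := by field_simp
      _ ≤ _ := by
        gcongr
        exact le_add_of_nonneg_of_le zero_le_one <| Finset.single_le_sum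
          (f := fun k => ‖a ^ k‖ / ε ^ k) (fun _ _ => by positivity) (Finset.mem_range.2 hk)
  · rw [pow_eq_zero_of_le hk hN, norm_zero]
    positivity

theorem norm_add_norm_apply_le_of_norm_pow_le {𝕜 E F : Type*} [NontriviallyNormedField 𝕜]
    [SeminormedAddCommGroup E] [NormedSpace 𝕜 E] [SeminormedAddCommGroup F] [NormedSpace 𝕜 F]
    {T : E →L[𝕜] E} {c ε : ℝ} (hT : ∀ k, ‖T ^ k‖ ≤ c * ε ^ k) (L : E →L[𝕜] F) {e : ℕ → E}
    (he : ∀ k, e (k + 1) = T (e k)) (k : ℕ) :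
    ‖e k‖ + ‖L (e k)‖ ≤ (1 + ‖L‖) * c * ε ^ k * ‖e 0‖ := by
  have hek : e k = (T ^ k) (e 0) := by
    induction k with
    | zero => rfl
    | succ k ih => rw [he, ih, pow_succ']; rfl
  calc ‖e k‖ + ‖L (e k)‖ ≤ (1 + ‖L‖) * ‖e k‖ := by linarith [L.le_opNorm (e k)]
    _ ≤ (1 + ‖L‖) * (c * ε ^ k * ‖e 0‖) := by
        gcongr
        rw [hek]
        exact (T ^ k).le_of_opNorm_le (hT k) _
    _ = (1 + ‖L‖) * c * ε ^ k * ‖e 0‖ := by ring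

theorem nextState_sub_nextState {n m : ℕ} (A : Matrix (Fin n) (Fin n) ℝ)
    (B : Matrix (Fin n) (Fin m) ℝ) (d x x' : EuclideanSpace ℝ (Fin n))
    (u u' : EuclideanSpace ℝ (Fin m)) :
    nextState A B d x u - nextState A B d x' u' =
      toEuclideanLin A (x - x') + toEuclideanLin B (u - u') := by
  ext i
  simp [nextState, mulVec, dotProduct]
  ring

theorem feedback_sub {n m : ℕ} (K : Matrix (Fin m) (Fin n) ℝ) (x xbar : EuclideanSpace ℝ (Fin n))
    (ubar : EuclideanSpace ℝ (Fin m)) :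
    (WithLp.toLp 2 (fun j => ubar j + ∑ i, K j i * (x i - xbar i)) : EuclideanSpace ℝ (Fin m)) -
      ubar = toEuclideanLin K (x - xbar) := by
  ext j
  simp [mulVec, dotProduct, mul_sub, Finset.sum_sub_distrib]

theorem nextState_feedback_sub {n m : ℕ} {A : Matrix (Fin n) (Fin n) ℝ}
    {B : Matrix (Fin n) (Fin m) ℝ} (K : Matrix (Fin m) (Fin n) ℝ)
    {d xbar : EuclideanSpace ℝ (Fin n)} {ubar : EuclideanSpace ℝ (Fin m)}
    (hss : xbar = nextState A B d xbar ubar) (x : EuclideanSpace ℝ (Fin n)) :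
    nextState A B d x (WithLp.toLp 2 (fun j => ubar j + ∑ i, K j i * (x i - xbar i))) - xbar =
      toEuclideanCLM (𝕜 := ℝ) (A + B * K) (x - xbar) := by
  calc _ = _ - nextState A B d xbar ubar := by rw [← hss]
    _ = toEuclideanLin A (x - xbar) + toEuclideanLin B (toEuclideanLin K (x - xbar)) := by
        rw [nextState_sub_nextState, feedback_sub]
    _ = toEuclideanCLM (𝕜 := ℝ) (A + B * K) (x - xbar) := by
        ext
        simp [mulVec_mulVec]

/-- If `(A, B)` is controllable then there is a feedback gain `K` placing
all (complex) eigenvalues of `A + BK` strictly inside the unit disc, and consequently any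
steady state `(x̄, ū)` of `x⁺ = Ax + Bu + d` is exponentially reached by the closed loop
`u_k = ū + K (x_k - x̄)` from any initial condition. -/
theorem controllable_implies_stabilizable_and_exponentially_reachable
    {n m : ℕ} (A : Matrix (Fin n) (Fin n) ℝ) (B : Matrix (Fin n) (Fin m) ℝ)
    (hctrb : (ctrbMatrix A B).rank = n) :
    ∃ K : Matrix (Fin m) (Fin n) ℝ,
      (∀ μ ∈ spectrum ℂ ((A + B * K).map Complex.ofReal), ‖μ‖ < 1) ∧
      ∀ (d xbar : EuclideanSpace ℝ (Fin n)) (ubar : EuclideanSpace ℝ (Fin m)),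
        xbar = nextState A B d xbar ubar →
        ∃ c : ℝ, 1 ≤ c ∧ ∃ ε ∈ Set.Ioo (0 : ℝ) 1,
          ∀ (x0 : EuclideanSpace ℝ (Fin n)) (x : ℕ → EuclideanSpace ℝ (Fin n))
            (u : ℕ → EuclideanSpace ℝ (Fin m)),
            x 0 = x0 →
            (∀ k, u k = (WithLp.toLp 2 (fun j => ubar j + ∑ i, K j i * (x k i - xbar i)) :
              EuclideanSpace ℝ (Fin m))) →
            (∀ k, x (k + 1) = nextState A B d (x k) (u k)) →
            ∀ k, ‖x k - xbar‖ + ‖u k - ubar‖ ≤ c * ε ^ k * ‖x0 - xbar‖ := by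
  obtain ⟨K, hK⟩ := exists_isNilpotent_add_mul_of_rank_ctrbMatrix hctrb
  refine ⟨K, fun μ hμ => ?_, fun d xbar ubar hss => ?_⟩
  · have hKc : IsNilpotent ((A + B * K).map Complex.ofReal) := hK.map Complex.ofRealHom.mapMatrix
    simp [Set.mem_singleton_iff.1 (spectrum_subset_singleton_zero_of_isNilpotent hKc hμ)]
  · set L := LinearMap.toContinuousLinearMap (toEuclideanLin K)
    obtain ⟨c, hc, hpow⟩ := (hK.map (toEuclideanCLM (𝕜 := ℝ) (n := Fin n))).exists_norm_pow_le
      (by norm_num : (0 : ℝ) < 1 / 2)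
    refine ⟨(1 + ‖L‖) * c, one_le_mul_of_one_le_of_one_le (by simp) hc, 1 / 2, by norm_num, ?_⟩
    rintro _ x u rfl hu hx k
    have := norm_add_norm_apply_le_of_norm_pow_le hpow L (e := fun k => x k - xbar)
      (fun k => by rw [hx, hu, nextState_feedback_sub K hss]) k
    simpa [hu k, feedback_sub, L] using this
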